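/- arXiv:2510.00854 — 4 statements merged into one kernel-verified Lean document; each statement's English description precedes it below -/
import Mathlib

section
/- Let M be a structure in a first-order language L and let φ be an L-formula with free variables indexed by Fin m ⊕ Fin n. Then φ has the order property in M if and only if there exist sequences a : ℕ → (Fin m → M) and b : ℕ → (Fin n → M) such that for every i, the formula φ holds of the assignment Sum.elim (a i) (b j) for all sufficiently large j, while for every j, the formula φ fails of Sum.elim (a i) (b j) for all sufficiently large i; that is, if and only if there are sequences for which the two iterated limits of the truth values of φ(a i, b j) exist and are different. -/
/-!
Given sequences along which `φ(a i, b j)` holds eventually in `j` and fails eventually in `i`,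
pick pairs of indices `(x₀, y₀), (x₁, y₁), …` one at a time, each far enough out that
`φ(a xₖ, b yₗ)` holds and `φ(a xₗ, b yₖ)` fails for all earlier `k < l`. Taking the `x`'s
at even and the `y`'s at odd positions then realises the order property; the parity shift
avoids ever comparing a pair with itself, where nothing is known.
-/

open FirstOrder FirstOrder.Language Filter

/-- An `L`-formula `φ` with free variables in `Fin m ⊕ Fin n` has the order property in an
`L`-structure `M` if there are sequences `a : ℕ → (Fin m → M)` and `b : ℕ → (Fin n → M)`
such that `φ(a i, b j)` holds iff `i ≤ j`. -/
def HasOrderProperty {L : FirstOrder.Language.{u, v}} {m n : ℕ}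
    (φ : L.Formula (Fin m ⊕ Fin n)) (M : Type w) [L.Structure M] : Prop :=
  ∃ (a : ℕ → Fin m → M) (b : ℕ → Fin n → M),
    ∀ i j : ℕ, φ.Realize (Sum.elim (a i) (b j)) ↔ i ≤ j

theorem Filter.exists_seq_forall_lt_of_eventually {α : Type*} {l : Filter α} [l.NeBot]
    {r : α → α → Prop} (h : ∀ x, ∀ᶠ y in l, r x y) :
    ∃ f : ℕ → α, ∀ m n, m < n → r (f m) (f n) := by
  obtain ⟨f, -, hf⟩ := exists_seq_of_forall_finset_exists (fun _ => True) r fun s _ =>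
    let ⟨y, hy⟩ := ((eventually_all_finset s).2 fun x _ => h x).exists
    ⟨y, trivial, hy⟩
  exact ⟨f, hf⟩

theorem Filter.exists_seq_rel_iff_le_of_eventually {α β : Type*} {la : Filter α}
    {lb : Filter β} [la.NeBot] [lb.NeBot] {R : α → β → Prop}
    (hR : ∀ x, ∀ᶠ y in lb, R x y) (hnR : ∀ y, ∀ᶠ x in la, ¬R x y) :
    ∃ (f : ℕ → α) (g : ℕ → β), ∀ i j, R (f i) (g j) ↔ i ≤ j := by
  obtain ⟨c, hc⟩ := exists_seq_forall_lt_of_eventually (l := la ×ˢ lb)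
    (r := fun p q => R p.1 q.2 ∧ ¬R q.1 p.2)
    fun p => ((hR p.1).prod_inr la).and ((hnR p.2).prod_inl lb)
  refine ⟨fun i => (c (2 * i)).1, fun j => (c (2 * j + 1)).2,
    fun i j => ⟨fun hcij => ?_, fun hij => ?_⟩⟩
  · by_contra hji
    exact (hc (2 * j + 1) (2 * i) (by omega)).2 hcij
  · exact (hc (2 * i) (2 * j + 1) (by omega)).1

/-- `φ` has the order property in `M` if and only if there exist sequences `a`, `b` such
that for every `i`, `φ(a i, b j)` holds for all sufficiently large `j`, while for every
`j`, `φ(a i, b j)` fails for all sufficiently large `i`; i.e. iff the two iterated limits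
of the truth values of `φ(a i, b j)` exist and are different. -/
theorem hasOrderProperty_iff_iterated_limits {L : FirstOrder.Language.{u, v}} {m n : ℕ}
    (φ : L.Formula (Fin m ⊕ Fin n)) (M : Type w) [L.Structure M] :
    HasOrderProperty φ M ↔
      ∃ (a : ℕ → Fin m → M) (b : ℕ → Fin n → M),
        (∀ i : ℕ, ∀ᶠ j in atTop, φ.Realize (Sum.elim (a i) (b j))) ∧
        (∀ j : ℕ, ∀ᶠ i in atTop, ¬ φ.Realize (Sum.elim (a i) (b j))) := by
  constructor
  · rintro ⟨a, b, hab⟩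
    exact ⟨a, b, fun i => (eventually_ge_atTop i).mono fun j hij => (hab i j).2 hij,
      fun j => (eventually_gt_atTop j).mono fun i hji => mt (hab i j).1 (not_le.2 hji)⟩
  · rintro ⟨a, b, hφ, hnφ⟩
    obtain ⟨f, g, hfg⟩ := exists_seq_rel_iff_le_of_eventually hφ hnφ
    exact ⟨a ∘ f, b ∘ g, hfg⟩
end

section
/- For every n and all tuples a, b : Fin n → ℂ, there exists a ring automorphism σ : ℂ ≃+* ℂ with σ (a i) = b i for every i if and only if a and b have the same vanishing ideal over ℚ, i.e. for every polynomial P ∈ MvPolynomial (Fin n) ℚ one has aeval a P = 0 if and only if aeval b P = 0. (The orbits of the diagonal action of Aut(ℂ/ℚ) on ℂⁿ are exactly the sets of generic points of the ℚ-irreducible Zariski-closed subvarieties of ℂⁿ.) -/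
/-!
An automorphism of `ℂ` fixes `ℚ`, so it commutes with evaluating rational polynomials; this gives
one direction. Conversely, if `a` and `b` have the same vanishing ideal `I`, then `X ↦ a` and
`X ↦ b` are two embeddings of the countable domain `ℚ[X]/I` into `ℂ`. Over either embedding, a
transcendence basis of `ℂ` has cardinality `#ℂ`, because `ℂ` is uncountable and algebraic over
the polynomial ring on the basis. A bijection between the two bases thus gives an isomorphism
of these polynomial rings over `ℚ[X]/I`, which extends to their common algebraic closure `ℂ`.
-/

open Cardinal

universe u

theorem IsAlgClosed.nonempty_algEquiv_of_countable {A : Type*} {K L : Type u}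
    [CommRing A] [Countable A] [Field K] [Field L] [IsAlgClosed K] [IsAlgClosed L]
    [Algebra A K] [Algebra A L] [FaithfulSMul A K] [FaithfulSMul A L]
    (hK : ℵ₀ < #K) (hKL : #K = #L) : Nonempty (K ≃ₐ[A] L) := by
  have := (algebraMap A K).domain_nontrivial
  obtain ⟨s, hs⟩ := exists_isTranscendenceBasis A K
  obtain ⟨t, ht⟩ := exists_isTranscendenceBasis A L
  have hst : #s = #t := by
    rw [← lift_inj.1 (cardinal_eq_cardinal_transcendence_basis_of_aleph0_lt _ hs mk_le_aleph0 hK),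
      ← lift_inj.1 (cardinal_eq_cardinal_transcendence_basis_of_aleph0_lt _ ht mk_le_aleph0
        (hKL ▸ hK)), hKL]
  obtain ⟨e⟩ := Cardinal.eq.1 hst
  let S := Algebra.adjoin A (Set.range ((↑) : s → K))
  let T := Algebra.adjoin A (Set.range ((↑) : t → L))
  let E : S ≃ₐ[A] T :=
    hs.1.aevalEquiv.symm.trans ((MvPolynomial.renameEquiv A e).trans ht.1.aevalEquiv)
  have := isAlgClosure_of_transcendence_basis _ hs
  have := isAlgClosure_of_transcendence_basis _ ht
  refine ⟨AlgEquiv.ofRingEquiv (f := IsAlgClosure.equivOfEquiv K L E.toRingEquiv) fun x => ?_⟩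
  rw [IsScalarTower.algebraMap_apply A S K, IsAlgClosure.equivOfEquiv_algebraMap]
  simp

theorem IsAlgClosed.exists_ringEquiv_apply_eq_of_ker_eq {A : Type*} {K L : Type u}
    [CommRing A] [Countable A] [Field K] [Field L] [IsAlgClosed K] [IsAlgClosed L]
    (f : A →+* K) (g : A →+* L) (hfg : RingHom.ker f = RingHom.ker g)
    (hK : ℵ₀ < #K) (hKL : #K = #L) : ∃ σ : K ≃+* L, ∀ x, σ (f x) = g x := by
  have : Countable (A ⧸ RingHom.ker f) := Ideal.Quotient.mk_surjective.countable
  let := f.kerLift.toAlgebra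
  let := (g.kerLift.comp (Ideal.quotEquivOfEq hfg).toRingHom).toAlgebra
  have : FaithfulSMul (A ⧸ RingHom.ker f) K :=
    (faithfulSMul_iff_algebraMap_injective _ _).2 f.kerLift_injective
  have : FaithfulSMul (A ⧸ RingHom.ker f) L :=
    (faithfulSMul_iff_algebraMap_injective _ _).2
      (g.kerLift_injective.comp (Ideal.quotEquivOfEq hfg).injective)
  obtain ⟨σ⟩ := nonempty_algEquiv_of_countable (A := A ⧸ RingHom.ker f) hK hKL
  exact ⟨σ, fun x => σ.commutes (Ideal.Quotient.mk _ x)⟩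

instance MvPolynomial.countable {σ R : Type*} [CommSemiring R] [Countable σ] [Countable R] :
    Countable (MvPolynomial σ R) :=
  Function.Injective.countable fun _ _ => AddMonoidAlgebra.coeff_inj.1

theorem MvPolynomial.aeval_eq_zero_iff_of_ringEquiv {ι R S : Type*} [CommRing R] [CommRing S]
    [Algebra ℚ R] [Algebra ℚ S] (σ : R ≃+* S) {a : ι → R} {b : ι → S}
    (h : ∀ i, σ (a i) = b i) (P : MvPolynomial ι ℚ) : aeval a P = 0 ↔ aeval b P = 0 := by
  rw [← map_eq_zero_iff σ σ.injective, ← RingHom.coe_coe σ, ← RingHom.toRatAlgHom_apply,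
    comp_aeval_apply]
  simp [h]

/-- Two `n`-tuples of complex numbers are in the same orbit of the diagonal action of the
automorphism group of `ℂ` if and only if they have the same vanishing ideal over `ℚ`:
there is a ring automorphism `σ` of `ℂ` with `σ (a i) = b i` for all `i` iff for every
polynomial `P` over `ℚ`, `P(a) = 0` iff `P(b) = 0`. -/
theorem exists_ringAut_map_eq_iff_vanishing_ideal_eq (n : ℕ) (a b : Fin n → ℂ) :
    (∃ σ : ℂ ≃+* ℂ, ∀ i, σ (a i) = b i) ↔
      ∀ P : MvPolynomial (Fin n) ℚ,
        MvPolynomial.aeval a P = 0 ↔ MvPolynomial.aeval b P = 0 := by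
  refine ⟨fun ⟨σ, hσ⟩ => MvPolynomial.aeval_eq_zero_iff_of_ringEquiv σ hσ, fun h => ?_⟩
  have hker : RingHom.ker (MvPolynomial.aeval a).toRingHom =
      RingHom.ker (MvPolynomial.aeval b).toRingHom := Ideal.ext h
  have hℂ : ℵ₀ < #ℂ := mk_complex ▸ aleph0_lt_continuum
  obtain ⟨σ, hσ⟩ := IsAlgClosed.exists_ringEquiv_apply_eq_of_ker_eq _ _ hker hℂ rfl
  exact ⟨σ, fun i => by simpa using hσ (MvPolynomial.X i)⟩
end

section
/- For every n and every set S ⊆ (Fin n → ℂ) of n-tuples of complex numbers, S is definable without parameters in the first-order language of rings (with ℂ carrying its natural ring-language structure) if and only if S belongs to the Boolean algebra of subsets of Fin n → ℂ generated by the zero sets {x | aeval x P = 0} of polynomials P ∈ MvPolynomial (Fin n) ℤ; that is, the subsets of ℂⁿ definable without parameters are exactly the constructible sets defined over the prime field. -/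
open FirstOrder FirstOrder.Language

/-- `ℂ` as a structure for the first-order language of rings, via its ring operations. -/
noncomputable instance : FirstOrder.Language.ring.Structure ℂ :=
  (FirstOrder.Ring.compatibleRingOfRing ℂ).toStructure

/-- Membership in the Boolean algebra of subsets of `α` generated by a family `G` of
subsets: the closure of `G` under complements and (finite) unions, containing `univ`. -/
inductive MemBooleanAlgebraGen {α : Type*} (G : Set (Set α)) : Set α → Prop
  | basic {s : Set α} : s ∈ G → MemBooleanAlgebraGen G s
  | univ : MemBooleanAlgebraGen G Set.univ
  | compl {s : Set α} : MemBooleanAlgebraGen G s → MemBooleanAlgebraGen G sᶜ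
  | union {s t : Set α} : MemBooleanAlgebraGen G s → MemBooleanAlgebraGen G t →
      MemBooleanAlgebraGen G (s ∪ t)

/-!
Definable sets are constructible by quantifier elimination, which comes down to showing that the
projection `{x | ∃ y, P₁(x, y) = ⋯ = Pₖ(x, y) = 0 ∧ Q(x, y) ≠ 0}` of a basic cell is
constructible. Split on whether the leading coefficient (in `y`) of `P₁` vanishes at `x`. If it
does, drop the leading term of `P₁`. If not, either `P₁` lowers the degree of another `Pᵢ` via
`cancelLeads`, which does not change the common roots, or `P₁` is the only equation, and then,
`K` being algebraically closed, the condition says `¬ P₁ ∣ Q ^ deg P₁`, a divisibility that is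
again decided uniformly in `x` by repeated `cancelLeads`. Conversely, zero sets of integer
polynomials are defined by atomic formulas.
-/

open scoped Polynomial Pointwise
open MvPolynomial (aeval)

theorem memBooleanAlgebraGen_iff_mem_closure {α : Type*} {G : Set (Set α)} {s : Set α} :
    MemBooleanAlgebraGen G s ↔ s ∈ BooleanSubalgebra.closure G := by
  refine ⟨fun h ↦ ?_, fun h ↦ ?_⟩
  · induction h with
    | basic hs => exact BooleanSubalgebra.subset_closure hs
    | univ => exact BooleanSubalgebra.top_mem
    | compl _ ih => exact BooleanSubalgebra.compl_mem ih
    | union _ _ ih₁ ih₂ => exact BooleanSubalgebra.sup_mem ih₁ ih₂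
  · induction h using BooleanSubalgebra.closure_bot_sup_induction with
    | mem s hs => exact .basic hs
    | bot => simpa using (MemBooleanAlgebraGen.univ (G := G)).compl
    | sup _ _ _ _ ih₁ ih₂ => exact ih₁.union ih₂
    | compl _ _ ih => exact ih.compl

namespace Polynomial

theorem exists_eval_eq_zero_and_ne_zero_iff {K : Type*} [Field K] [IsAlgClosed K] {p : K[X]}
    (hp : p ≠ 0) (q : K[X]) :
    (∃ y, p.eval y = 0 ∧ q.eval y ≠ 0) ↔ ¬ p ∣ q ^ p.natDegree := by
  refine ⟨fun ⟨y, hpy, hqy⟩ hdvd ↦ hqy ?_, fun h ↦ ?_⟩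
  · exact eq_zero_of_pow_eq_zero (by simpa using eval_eq_zero_of_dvd_of_eval_eq_zero hdvd hpy)
  by_contra! hroots
  refine h ?_
  have hprod : (p.roots.map (X - C ·)).prod ∣ q ^ p.natDegree := calc
    _ ∣ (p.roots.map fun _ ↦ q).prod := Multiset.prod_dvd_prod_of_dvd _ _ fun a ha ↦
      dvd_iff_isRoot.2 (hroots a (isRoot_of_mem_roots ha))
    _ = q ^ p.roots.card := by simp
    _ ∣ q ^ p.natDegree := pow_dvd_pow q (card_roots' p)
  calc p = C p.leadingCoeff * (p.roots.map (X - C ·)).prod := (IsAlgClosed.splits p).eq_prod_roots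
    _ ∣ q ^ p.natDegree := (isUnit_C.2 (leadingCoeff_ne_zero.2 hp).isUnit).mul_left_dvd.2 hprod

theorem degree_cancelLeads_lt {R : Type*} [CommRing R] {p q : R[X]} (hq : q ≠ 0)
    (h : p.natDegree ≤ q.natDegree) : (p.cancelLeads q).degree < q.degree := by
  rcases Nat.eq_zero_or_pos q.natDegree with hq0 | hq0
  · obtain ⟨a, rfl⟩ := natDegree_eq_zero.1 hq0
    obtain ⟨b, rfl⟩ := natDegree_eq_zero.1 (Nat.le_zero.1 (hq0 ▸ h))
    simpa [cancelLeads, mul_comm, bot_lt_iff_ne_bot] using hq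
  · exact degree_lt_degree (natDegree_cancelLeads_lt_of_natDegree_le_natDegree h hq0)

end Polynomial

section Constructible

variable {R K ι κ : Type*} [CommRing R] [Field K] [Algebra R K]

variable (K) in
def commonZeros (s : Set (MvPolynomial ι R)) : Set (ι → K) := {x | ∀ p ∈ s, aeval x p = 0}

variable (R K ι) in
def finiteZeroLoci : Set (Set (ι → K)) :=
  {V | ∃ s : Set (MvPolynomial ι R), s.Finite ∧ commonZeros K s = V}

variable (R K ι) in
def constructible : BooleanSubalgebra (Set (ι → K)) := .closure (finiteZeroLoci R K ι)

@[simp]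
theorem mem_commonZeros {s : Set (MvPolynomial ι R)} {x : ι → K} :
    x ∈ commonZeros K s ↔ ∀ p ∈ s, aeval x p = 0 := .rfl

@[simp]
theorem commonZeros_singleton (p : MvPolynomial ι R) :
    commonZeros K {p} = {x | aeval x p = 0} := by
  ext; simp

theorem commonZeros_union (s t : Set (MvPolynomial ι R)) :
    commonZeros K (s ∪ t) = commonZeros K s ∩ commonZeros K t := by
  ext x; simp [or_imp, forall_and]

theorem commonZeros_mul (s t : Set (MvPolynomial ι R)) :
    commonZeros K (s * t) = commonZeros K s ∪ commonZeros K t := by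
  ext x
  simp only [mem_commonZeros, Set.mem_mul, Set.mem_union, forall_exists_index, and_imp]
  constructor
  · intro h
    by_contra! hne
    obtain ⟨⟨p, hp, hp0⟩, ⟨q, hq, hq0⟩⟩ := hne
    exact mul_ne_zero hp0 hq0 (by simpa using h _ p hp q hq rfl)
  · rintro (h | h) _ p hp q hq rfl
    · simp [h p hp]
    · simp [h q hq]

theorem isSublattice_finiteZeroLoci : IsSublattice (finiteZeroLoci R K ι) where
  supClosed := by
    rintro _ ⟨s, hs, rfl⟩ _ ⟨t, ht, rfl⟩
    exact ⟨s * t, hs.mul ht, commonZeros_mul s t⟩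
  infClosed := by
    rintro _ ⟨s, hs, rfl⟩ _ ⟨t, ht, rfl⟩
    exact ⟨s ∪ t, hs.union ht, commonZeros_union s t⟩

theorem empty_mem_finiteZeroLoci : (∅ : Set (ι → K)) ∈ finiteZeroLoci R K ι :=
  ⟨{1}, Set.finite_singleton 1, by ext; simp⟩

theorem univ_mem_finiteZeroLoci : (Set.univ : Set (ι → K)) ∈ finiteZeroLoci R K ι :=
  ⟨∅, Set.finite_empty, by ext; simp⟩

theorem commonZeros_mem_constructible {s : Set (MvPolynomial ι R)} (hs : s.Finite) :
    commonZeros K s ∈ constructible R K ι :=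
  BooleanSubalgebra.subset_closure ⟨s, hs, rfl⟩

theorem constructible_eq_closure_zeroSets :
    constructible R K ι =
      .closure {t | ∃ P : MvPolynomial ι R, t = {x | aeval x P = 0}} := by
  refine le_antisymm (BooleanSubalgebra.closure_le.2 ?_) (BooleanSubalgebra.closure_le.2 ?_)
  · rintro _ ⟨s, hs, rfl⟩
    have : commonZeros K s = ⋂ p ∈ s, {x | aeval x p = 0} := by ext; simp
    rw [SetLike.mem_coe, this]
    exact BooleanSubalgebra.biInf_mem hs fun p _ ↦ BooleanSubalgebra.subset_closure ⟨p, rfl⟩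
  · rintro _ ⟨P, rfl⟩
    simpa using commonZeros_mem_constructible (K := K) (Set.finite_singleton P)

theorem preimage_comp_mem_constructible (f : ι → κ) {S : Set (ι → K)}
    (hS : S ∈ constructible R K ι) : (· ∘ f) ⁻¹' S ∈ constructible R K κ := by
  suffices constructible R K ι ≤ (constructible R K κ).comap
      (CompleteLatticeHom.setPreimage (· ∘ f)).toBoundedLatticeHom from this hS
  refine BooleanSubalgebra.closure_le.2 ?_
  rintro _ ⟨s, hs, rfl⟩
  refine BooleanSubalgebra.subset_closure ⟨MvPolynomial.rename f '' s, hs.image _, ?_⟩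
  ext x
  simp [MvPolynomial.aeval_rename]

variable (K) in
noncomputable def specAt (x : ι → K) : (MvPolynomial ι R)[X] →+* K[X] :=
  Polynomial.mapRingHom (aeval x).toRingHom

@[simp]
theorem coeff_specAt (x : ι → K) (F : (MvPolynomial ι R)[X]) (j : ℕ) :
    (specAt K x F).coeff j = aeval x (F.coeff j) :=
  Polynomial.coeff_map _ _

@[simp]
theorem specAt_C (x : ι → K) (c : MvPolynomial ι R) :
    specAt K x (Polynomial.C c) = Polynomial.C (aeval x c) :=
  Polynomial.map_C _

@[simp]
theorem specAt_X (x : ι → K) : specAt K x (Polynomial.X : (MvPolynomial ι R)[X]) = Polynomial.X :=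
  Polynomial.map_X _

theorem setOf_specAt_eq_zero (F : (MvPolynomial ι R)[X]) :
    {x : ι → K | specAt K x F = 0} = commonZeros K (F.coeff '' F.support) := by
  ext x
  simp only [Set.mem_ofPred_eq, Polynomial.ext_iff, coeff_specAt, Polynomial.coeff_zero,
    mem_commonZeros, Set.forall_mem_image, Finset.mem_coe]
  refine ⟨fun h j _ ↦ h j, fun h j ↦ ?_⟩
  by_cases hj : j ∈ F.support
  · exact h hj
  · simp [Polynomial.notMem_support_iff.1 hj]

theorem specAt_eraseLead {x : ι → K} {F : (MvPolynomial ι R)[X]}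
    (h : aeval x F.leadingCoeff = 0) : specAt K x F.eraseLead = specAt K x F := by
  conv_rhs => rw [← F.eraseLead_add_C_mul_X_pow, map_add, map_mul, specAt_C, h]
  simp

theorem specAt_cancelLeads (x : ι → K) {P F : (MvPolynomial ι R)[X]}
    (h : P.natDegree ≤ F.natDegree) :
    specAt K x (P.cancelLeads F) = Polynomial.C (aeval x P.leadingCoeff) * specAt K x F -
      Polynomial.C (aeval x F.leadingCoeff) * Polynomial.X ^ (F.natDegree - P.natDegree) *
        specAt K x P := by
  simp [Polynomial.cancelLeads, Nat.sub_eq_zero_of_le h]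

theorem natDegree_specAt {x : ι → K} {P : (MvPolynomial ι R)[X]}
    (h : aeval x P.leadingCoeff ≠ 0) : (specAt K x P).natDegree = P.natDegree :=
  Polynomial.natDegree_map_of_leadingCoeff_ne_zero _ h

theorem specAt_ne_zero {x : ι → K} {P : (MvPolynomial ι R)[X]}
    (h : aeval x P.leadingCoeff ≠ 0) : specAt K x P ≠ 0 := fun h0 ↦
  h (by simpa [h0] using (coeff_specAt x P P.natDegree).symm)

theorem aeval_elim'_eq_eval_specAt (x : ι → K) (y : K) (p : MvPolynomial (Option ι) R) :
    aeval (Option.elim' y x) p =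
      (specAt K x (MvPolynomial.optionEquivLeft R ι p)).eval y := by
  induction p using MvPolynomial.induction_on with
  | C a => simp [MvPolynomial.optionEquivLeft_C]
  | add p q hp hq => simp [hp, hq]
  | mul_X p i hp =>
    cases i <;> simp [hp, MvPolynomial.optionEquivLeft_X_none, MvPolynomial.optionEquivLeft_X_some]

theorem specAt_dvd_specAt_cancelLeads_iff {x : ι → K} {P F : (MvPolynomial ι R)[X]}
    (hx : aeval x P.leadingCoeff ≠ 0) (h : P.natDegree ≤ F.natDegree) :
    specAt K x P ∣ specAt K x (P.cancelLeads F) ↔ specAt K x P ∣ specAt K x F := by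
  rw [specAt_cancelLeads x h, dvd_sub_left (dvd_mul_left _ _),
    (Polynomial.isUnit_C.2 hx.isUnit).dvd_mul_left]

theorem setOf_specAt_dvd_diff_mem_constructible (P F : (MvPolynomial ι R)[X]) :
    {x | specAt K x P ∣ specAt K x F} \ commonZeros K {P.leadingCoeff} ∈ constructible R K ι := by
  have hZ := commonZeros_mem_constructible (K := K) (Set.finite_singleton P.leadingCoeff)
  by_cases hF : F = 0
  · simpa [hF, Set.sdiff_eq_compl_inter] using BooleanSubalgebra.compl_mem hZ
  rcases lt_or_ge F.degree P.degree with hlt | hle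
  · have hF₀ := commonZeros_mem_constructible (K := K) (F.support.finite_toSet.image F.coeff)
    rw [← setOf_specAt_eq_zero] at hF₀
    convert BooleanSubalgebra.sdiff_mem hF₀ hZ using 1
    ext x
    simp only [Set.mem_sdiff, commonZeros_singleton, Set.mem_ofPred_eq]
    refine and_congr_left fun hx ↦ ⟨fun hdvd ↦ Polynomial.eq_zero_of_dvd_of_degree_lt hdvd ?_,
      fun h ↦ h ▸ dvd_zero _⟩
    calc (specAt K x F).degree ≤ F.degree := Polynomial.degree_map_le
      _ < P.degree := hlt
      _ = (specAt K x P).degree := (Polynomial.degree_map_eq_of_leadingCoeff_ne_zero _ hx).symm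
  · have hdeg := Polynomial.natDegree_le_natDegree hle
    convert setOf_specAt_dvd_diff_mem_constructible P (P.cancelLeads F) using 1
    ext x
    simp only [Set.mem_sdiff, commonZeros_singleton, Set.mem_ofPred_eq]
    exact and_congr_left fun hx ↦ (specAt_dvd_specAt_cancelLeads_iff hx hdeg).symm
termination_by F.degree
decreasing_by exact Polynomial.degree_cancelLeads_lt hF hdeg

variable (K) in
def projCell (l : List (MvPolynomial ι R)[X]) (Q : (MvPolynomial ι R)[X]) : Set (ι → K) :=
  {x | ∃ y, (∀ P ∈ l, (specAt K x P).eval y = 0) ∧ (specAt K x Q).eval y ≠ 0}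

section projCell

variable {l : List (MvPolynomial ι R)[X]} {P P₁ P₂ Q : (MvPolynomial ι R)[X]}

theorem projCell_nil [Infinite K] : projCell K ([] : List (MvPolynomial ι R)[X]) Q =
    {x | specAt K x Q = 0}ᶜ := by
  ext x
  simp only [projCell, List.not_mem_nil, IsEmpty.forall_iff, implies_true, true_and,
    Set.mem_compl_iff, Set.mem_ofPred_eq]
  exact ⟨fun ⟨y, hy⟩ h ↦ hy (by simp [h]),
    fun h ↦ not_forall.1 fun h' ↦ h (Polynomial.zero_of_eval_zero _ h')⟩

theorem projCell_cons_zero : projCell K (0 :: l) Q = projCell K l Q := by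
  simp [projCell]

theorem projCell_swap : projCell K (P₁ :: P₂ :: l) Q = projCell K (P₂ :: P₁ :: l) Q := by
  simp [projCell, and_left_comm]

theorem projCell_cons_inter_eraseLead :
    projCell K (P :: l) Q ∩ commonZeros K {P.leadingCoeff} =
      projCell K (P.eraseLead :: l) Q ∩ commonZeros K {P.leadingCoeff} := by
  ext x
  simp only [Set.mem_inter_iff, commonZeros_singleton, Set.mem_ofPred_eq]
  exact and_congr_left fun hx ↦ by simp [projCell, specAt_eraseLead hx]

theorem projCell_cons_cons_diff_cancelLeads (h : P₁.natDegree ≤ P₂.natDegree) :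
    projCell K (P₁ :: P₂ :: l) Q \ commonZeros K {P₁.leadingCoeff} =
      projCell K (P₁ :: P₁.cancelLeads P₂ :: l) Q \ commonZeros K {P₁.leadingCoeff} := by
  ext x
  simp only [Set.mem_sdiff, commonZeros_singleton, Set.mem_ofPred_eq]
  refine and_congr_left fun hx ↦ exists_congr fun y ↦ and_congr_left fun _ ↦ ?_
  simp only [List.forall_mem_cons]
  refine and_congr_right fun h₁ ↦ and_congr_left' ?_
  rw [specAt_cancelLeads x h, Polynomial.eval_sub, Polynomial.eval_mul, Polynomial.eval_mul, h₁,
    mul_zero, sub_zero, Polynomial.eval_C, mul_eq_zero, or_iff_right hx]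

theorem projCell_singleton_diff [IsAlgClosed K] :
    projCell K [P] Q \ commonZeros K {P.leadingCoeff} =
      (commonZeros K {P.leadingCoeff})ᶜ \
        ({x | specAt K x P ∣ specAt K x (Q ^ P.natDegree)} \ commonZeros K {P.leadingCoeff}) := by
  ext x
  simp only [Set.mem_sdiff, Set.mem_compl_iff, commonZeros_singleton, Set.mem_ofPred_eq]
  by_cases hx : aeval x P.leadingCoeff = 0
  · simp [hx]
  simp only [hx, not_false_eq_true, and_true, true_and, projCell, List.forall_mem_cons,
    List.not_mem_nil, IsEmpty.forall_iff, implies_true, Set.mem_ofPred_eq]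
  rw [map_pow, ← natDegree_specAt hx]
  exact Polynomial.exists_eval_eq_zero_and_ne_zero_iff (specAt_ne_zero hx) _

theorem projCell_cons_cons_mem_constructible (h : P₁.natDegree ≤ P₂.natDegree)
    (h₁ : projCell K (P₁.eraseLead :: P₂ :: l) Q ∈ constructible R K ι)
    (h₂ : projCell K (P₁ :: P₁.cancelLeads P₂ :: l) Q ∈ constructible R K ι) :
    projCell K (P₁ :: P₂ :: l) Q ∈ constructible R K ι := by
  have hZ := commonZeros_mem_constructible (K := K) (Set.finite_singleton P₁.leadingCoeff)
  rw [← Set.inter_union_sdiff (projCell K _ Q) (commonZeros K {P₁.leadingCoeff}),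
    projCell_cons_inter_eraseLead, projCell_cons_cons_diff_cancelLeads h]
  exact BooleanSubalgebra.sup_mem (BooleanSubalgebra.inf_mem h₁ hZ)
    (BooleanSubalgebra.sdiff_mem h₂ hZ)

variable [IsAlgClosed K]

theorem projCell_singleton_mem_constructible
    (h : projCell K [P.eraseLead] Q ∈ constructible R K ι) :
    projCell K [P] Q ∈ constructible R K ι := by
  have hZ := commonZeros_mem_constructible (K := K) (Set.finite_singleton P.leadingCoeff)
  rw [← Set.inter_union_sdiff (projCell K [P] Q) (commonZeros K {P.leadingCoeff}),
    projCell_cons_inter_eraseLead, projCell_singleton_diff]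
  exact BooleanSubalgebra.sup_mem (BooleanSubalgebra.inf_mem h hZ)
    (BooleanSubalgebra.sdiff_mem (BooleanSubalgebra.compl_mem hZ)
      (setOf_specAt_dvd_diff_mem_constructible _ _))

end projCell

/-- Since `(0 : A[X]).degree.succ = 0`, the summand `1` is what makes dropping an equation `0 = 0`
decrease the weight. -/
noncomputable def degreeWeight {A : Type*} [Semiring A] (l : List A[X]) : ℕ :=
  (l.map fun P ↦ P.degree.succ + 1).sum

@[simp]
theorem degreeWeight_cons {A : Type*} [Semiring A] (P : A[X]) (l : List A[X]) :
    degreeWeight (P :: l) = P.degree.succ + 1 + degreeWeight l := by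
  simp [degreeWeight]

theorem projCell_mem_constructible [IsAlgClosed K] (l : List (MvPolynomial ι R)[X])
    (Q : (MvPolynomial ι R)[X]) : projCell K l Q ∈ constructible R K ι := by
  induction l using (measure degreeWeight).wf.induction with
  | h l ih =>
  rcases l with _ | ⟨P₁, _ | ⟨P₂, l⟩⟩
  · rw [projCell_nil, setOf_specAt_eq_zero]
    exact BooleanSubalgebra.compl_mem
      (commonZeros_mem_constructible (Q.support.finite_toSet.image _))
  · by_cases hP₁ : P₁ = 0
    · rw [hP₁, projCell_cons_zero]
      exact ih [] (show degreeWeight _ < degreeWeight _ by simp)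
    have := WithBot.succ_lt_succ (Polynomial.degree_eraseLead_lt hP₁)
    exact projCell_singleton_mem_constructible
      (ih _ (show degreeWeight _ < degreeWeight _ by simp; omega))
  · replace ih : ∀ l', degreeWeight l' < degreeWeight (P₁ :: P₂ :: l) →
        projCell K l' Q ∈ constructible R K ι := ih
    by_cases hP₁ : P₁ = 0
    · rw [hP₁, projCell_cons_zero]
      exact ih _ (by simp)
    by_cases hP₂ : P₂ = 0
    · rw [projCell_swap, hP₂, projCell_cons_zero]
      exact ih _ (by simp)
    have hP₁' := WithBot.succ_lt_succ (Polynomial.degree_eraseLead_lt hP₁)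
    have hP₂' := WithBot.succ_lt_succ (Polynomial.degree_eraseLead_lt hP₂)
    rcases le_total P₁.natDegree P₂.natDegree with h | h
    · have := WithBot.succ_lt_succ (Polynomial.degree_cancelLeads_lt hP₂ h)
      exact projCell_cons_cons_mem_constructible h (ih _ (by simp; omega)) (ih _ (by simp; omega))
    · have := WithBot.succ_lt_succ (Polynomial.degree_cancelLeads_lt hP₁ h)
      rw [projCell_swap]
      exact projCell_cons_cons_mem_constructible h (ih _ (by simp; omega)) (ih _ (by simp; omega))

theorem setOf_exists_elim'_mem_constructible [IsAlgClosed K] {S : Set (Option ι → K)}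
    (hS : S ∈ constructible R K (Option ι)) :
    {x | ∃ y, Option.elim' y x ∈ S} ∈ constructible R K ι := by
  induction S, hS using BooleanSubalgebra.closure_sdiff_sup_induction isSublattice_finiteZeroLoci
    empty_mem_finiteZeroLoci univ_mem_finiteZeroLoci with
  | sdiff V hV W hW =>
    obtain ⟨s, hs, rfl⟩ := hV
    obtain ⟨t, ht, rfl⟩ := hW
    obtain ⟨s, rfl⟩ := hs.exists_finset_coe
    convert BooleanSubalgebra.biSup_mem ht fun q _ ↦ projCell_mem_constructible (K := K)
      (s.toList.map (MvPolynomial.optionEquivLeft R ι)) (MvPolynomial.optionEquivLeft R ι q)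
    ext x
    simp only [Set.mem_sdiff, mem_commonZeros, SetLike.mem_coe, aeval_elim'_eq_eval_specAt,
      not_forall, Set.mem_ofPred_eq, projCell, List.mem_map, Finset.mem_toList,
      forall_exists_index, and_imp, forall_apply_eq_imp_iff₂, ne_eq, Set.iSup_eq_iUnion,
      Set.mem_iUnion, exists_prop]
    exact ⟨fun ⟨y, h, q, hq, hy⟩ ↦ ⟨q, hq, y, h, hy⟩, fun ⟨q, hq, y, h, hy⟩ ↦ ⟨y, h, q, hq, hy⟩⟩
  | sup V _ W _ ihV ihW =>
    convert BooleanSubalgebra.sup_mem ihV ihW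
    ext x
    simp [exists_or]

end Constructible

section ModelTheory

variable {K β : Type*}

section CommRing

variable [CommRing K] [FirstOrder.Ring.CompatibleRing K]

theorem FirstOrder.Language.Term.exists_mvPolynomial_realize_eq (t : Language.ring.Term β) :
    ∃ P : MvPolynomial β ℤ, ∀ v : β → K, t.realize v = aeval v P := by
  induction t with
  | var i => exact ⟨MvPolynomial.X i, by simp⟩
  | func f ts ih =>
    choose P hP using ih
    cases f with
    | add => exact ⟨P 0 + P 1, fun v ↦ by simp [Term.realize, ← hP]⟩
    | mul => exact ⟨P 0 * P 1, fun v ↦ by simp [Term.realize, ← hP]⟩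
    | neg => exact ⟨-P 0, fun v ↦ by simp [Term.realize, ← hP]⟩
    | zero => exact ⟨0, fun v ↦ by simp [Term.realize]⟩
    | one => exact ⟨1, fun v ↦ by simp [Term.realize]⟩

theorem MvPolynomial.exists_term_realize_eq_aeval (P : MvPolynomial β ℤ) :
    ∃ t : Language.ring.Term β, ∀ v : β → K, t.realize v = aeval v P := by
  refine ⟨FirstOrder.Ring.termOfFreeCommRing
    (MvPolynomial.eval₂Hom (Int.castRingHom _) FreeCommRing.of P), fun v ↦ ?_⟩
  rw [FirstOrder.Ring.realize_termOfFreeCommRing, ← RingHom.comp_apply]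
  congr 1
  exact MvPolynomial.ringHom_ext (fun _ ↦ by simp) (fun _ ↦ by simp)

theorem MvPolynomial.definable_setOf_aeval_eq_zero (P : MvPolynomial β ℤ) :
    (∅ : Set K).Definable Language.ring {v | aeval v P = 0} := by
  obtain ⟨t, ht⟩ := P.exists_term_realize_eq_aeval (K := K)
  exact Set.empty_definable_iff.2 ⟨t.equal 0, by ext v; simp [ht]⟩

end CommRing

variable [Field K] [FirstOrder.Ring.CompatibleRing K]

theorem setOf_realize_mem_constructible [IsAlgClosed K] {α : Type*} {m : ℕ}
    (φ : Language.ring.BoundedFormula α m) :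
    {v : α ⊕ Fin m → K | φ.Realize (v ∘ Sum.inl) (v ∘ Sum.inr)} ∈
      constructible ℤ K (α ⊕ Fin m) := by
  induction φ with
  | falsum => simpa [BoundedFormula.Realize] using (constructible ℤ K _).bot_mem
  | equal t₁ t₂ =>
    obtain ⟨P₁, h₁⟩ := t₁.exists_mvPolynomial_realize_eq (K := K)
    obtain ⟨P₂, h₂⟩ := t₂.exists_mvPolynomial_realize_eq (K := K)
    convert commonZeros_mem_constructible (K := K) (Set.finite_singleton (P₁ - P₂)) using 1
    ext v
    simp [BoundedFormula.Realize, h₁, h₂, sub_eq_zero]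
  | rel r => exact isEmptyElim r
  | imp φ ψ ihφ ihψ =>
    convert BooleanSubalgebra.sup_mem (BooleanSubalgebra.compl_mem ihφ) ihψ using 1
    ext v
    simp [imp_iff_not_or]
  | @all m φ ih =>
    let g : α ⊕ Fin (m + 1) → Option (α ⊕ Fin m) :=
      Sum.elim (some ∘ Sum.inl) (Fin.snoc (some ∘ Sum.inr) none)
    have hg (v : α ⊕ Fin m → K) (y : K) : (Option.elim' y v ∘ g) ∘ Sum.inl = v ∘ Sum.inl ∧
        (Option.elim' y v ∘ g) ∘ Sum.inr = Fin.snoc (v ∘ Sum.inr) y :=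
      ⟨rfl, Fin.comp_snoc _ _ _⟩
    convert BooleanSubalgebra.compl_mem (setOf_exists_elim'_mem_constructible
      (preimage_comp_mem_constructible g (BooleanSubalgebra.compl_mem ih))) using 1
    ext v
    simp [hg]

theorem mem_constructible_of_definable [IsAlgClosed K] {α : Type*} {S : Set (α → K)}
    (h : (∅ : Set K).Definable Language.ring S) : S ∈ constructible ℤ K α := by
  obtain ⟨φ, rfl⟩ := Set.empty_definable_iff.1 h
  convert preimage_comp_mem_constructible (Sum.elim id finZeroElim)
    (setOf_realize_mem_constructible (K := K) φ) using 1
  ext v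
  simp only [Set.mem_preimage, Set.mem_ofPred_eq, Formula.Realize]
  exact iff_of_eq (congrArg _ (Subsingleton.elim _ _))

end ModelTheory

noncomputable instance : FirstOrder.Ring.CompatibleRing ℂ where
  funMap_add _ := rfl
  funMap_mul _ := rfl
  funMap_neg _ := rfl
  funMap_zero _ := rfl
  funMap_one _ := rfl

/-- A set `S` of `n`-tuples of complex numbers is definable without parameters in the
language of rings if and only if it belongs to the Boolean algebra of subsets of
`Fin n → ℂ` generated by the zero sets of polynomials with integer coefficients, i.e. iff
it is constructible over the prime field. -/
theorem definable_iff_constructible (n : ℕ) (S : Set (Fin n → ℂ)) :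
    (∅ : Set ℂ).Definable FirstOrder.Language.ring S ↔
      MemBooleanAlgebraGen
        {t : Set (Fin n → ℂ) | ∃ P : MvPolynomial (Fin n) ℤ,
          t = {x | MvPolynomial.aeval x P = 0}} S := by
  refine ⟨fun h ↦ ?_, fun h ↦ ?_⟩
  · rw [memBooleanAlgebraGen_iff_mem_closure, ← constructible_eq_closure_zeroSets]
    exact mem_constructible_of_definable h
  · induction h with
    | basic hs => obtain ⟨P, rfl⟩ := hs; exact P.definable_setOf_aeval_eq_zero
    | univ => exact Set.definable_univ
    | compl _ ih => exact ih.compl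
    | union _ _ ih₁ ih₂ => exact ih₁.union ih₂
end

section
/- Let K be a field and V an infinite-dimensional K-vector space. For tuples a, b : Fin n → V, there exists a K-linear automorphism g : V ≃ₗ[K] V with g (a i) = b i for every i if and only if a and b satisfy exactly the same K-linear relations, i.e. for every c : Fin n → K one has ∑ i, c i • a i = 0 if and only if ∑ i, c i • b i = 0. (The orbits of the diagonal action of GL(V) on Vⁿ are determined by the linear relations among the coordinates.) -/
open Cardinal

/-!
Let `φ, ψ : Kⁿ → V` be the linear combination maps of `a` and `b`. Having the same linear
relations means `ker φ = ker ψ`, so `φ c ↦ ψ c` is a well-defined isomorphism between the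
finite-dimensional spans of `a` and `b`. Both spans have quotients of rank `rank V`, since `V` is
infinite-dimensional, so their complements are isomorphic and the isomorphism extends to all of
`V`. The converse is immediate.
-/

section

variable {K V W : Type*} [DivisionRing K] [AddCommGroup V] [Module K V]
  [AddCommGroup W] [Module K W]

theorem LinearEquiv.exists_extend_of_rank_quotient_eq {V₁ V₂ : Submodule K V} (e : V₁ ≃ₗ[K] V₂)
    (h : Module.rank K (V ⧸ V₁) = Module.rank K (V ⧸ V₂)) :
    ∃ g : V ≃ₗ[K] V, ∀ x : V₁, g x = e x := by
  obtain ⟨C₁, hC₁⟩ := V₁.exists_isCompl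
  obtain ⟨C₂, hC₂⟩ := V₂.exists_isCompl
  obtain ⟨eQ⟩ := nonempty_linearEquiv_of_rank_eq h
  let eC : C₁ ≃ₗ[K] C₂ := (V₁.quotientEquivOfIsCompl C₁ hC₁).symm ≪≫ₗ eQ ≪≫ₗ
    V₂.quotientEquivOfIsCompl C₂ hC₂
  refine ⟨(V₁.prodEquivOfIsCompl C₁ hC₁).symm ≪≫ₗ e.prodCongr eC ≪≫ₗ
    V₂.prodEquivOfIsCompl C₂ hC₂, fun x => ?_⟩
  simp

theorem LinearMap.exists_linearEquiv_comp_eq_of_ker_eq {f g : W →ₗ[K] V}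
    (hker : LinearMap.ker f = LinearMap.ker g)
    (hrank : Module.rank K (V ⧸ LinearMap.range f) = Module.rank K (V ⧸ LinearMap.range g)) :
    ∃ e : V ≃ₗ[K] V, ∀ x, e (f x) = g x := by
  let e₀ : LinearMap.range f ≃ₗ[K] LinearMap.range g :=
    f.quotKerEquivRange.symm ≪≫ₗ Submodule.quotEquivOfEq _ _ hker ≪≫ₗ g.quotKerEquivRange
  obtain ⟨e, he⟩ := e₀.exists_extend_of_rank_quotient_eq hrank
  refine ⟨e, fun x => ?_⟩
  have hx : f.rangeRestrict x = f.quotKerEquivRange (Submodule.Quotient.mk x) := rfl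
  simpa [e₀, hx] using he (f.rangeRestrict x)

theorem rank_quotient_eq_of_rank_lt_aleph0 (hV : ℵ₀ ≤ Module.rank K V) {U : Submodule K V}
    (hU : Module.rank K U < ℵ₀) : Module.rank K (V ⧸ U) = Module.rank K V :=
  eq_of_add_eq_of_aleph0_le (by rw [add_comm, U.rank_quotient_add_rank]) (hU.trans_le hV) hV

end

/-- Let `V` be an infinite-dimensional vector space over a field `K`. Two `n`-tuples of
vectors are in the same orbit of the diagonal action of `GL(V)` if and only if they
satisfy exactly the same `K`-linear relations: there is a linear automorphism `g` of `V`
with `g (a i) = b i` for all `i` iff for every `c : Fin n → K`, `∑ i, c i • a i = 0` iff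
`∑ i, c i • b i = 0`. -/
theorem exists_linearEquiv_map_eq_iff_same_linear_relations
    (K : Type u) (V : Type v) [Field K] [AddCommGroup V] [Module K V]
    (hV : ℵ₀ ≤ Module.rank K V) (n : ℕ) (a b : Fin n → V) :
    (∃ g : V ≃ₗ[K] V, ∀ i, g (a i) = b i) ↔
      ∀ c : Fin n → K, (∑ i, c i • a i = 0 ↔ ∑ i, c i • b i = 0) := by
  constructor
  · rintro ⟨g, hg⟩ c
    have hgc : g (∑ i, c i • a i) = ∑ i, c i • b i := by simp [hg]
    rw [← hgc, g.map_eq_zero_iff]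
  · intro hrel
    have hker : LinearMap.ker (Fintype.linearCombination K a) =
        LinearMap.ker (Fintype.linearCombination K b) := by
      ext c
      simpa [Fintype.linearCombination_apply] using hrel c
    have hquot (v : Fin n → V) :
        Module.rank K (V ⧸ LinearMap.range (Fintype.linearCombination K v)) = Module.rank K V :=
      rank_quotient_eq_of_rank_lt_aleph0 hV (Module.rank_lt_aleph0 _ _)
    obtain ⟨g, hg⟩ := LinearMap.exists_linearEquiv_comp_eq_of_ker_eq hker (by rw [hquot, hquot])
    classical
    exact ⟨g, fun i => by simpa using hg (Pi.single i 1)⟩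
end
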